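/- arXiv:1710.09277 — 8 statements merged into one kernel-verified Lean document; each statement's English description precedes it below -/
import Mathlib

section
/- Let A > 0 and let (t_k)_{k≥1} be a sequence of real numbers with t_1 = 1 and 0 < t_k ≤ 1 for all k. Let (a_m)_{m≥1} be a sequence of non-negative real numbers satisfying a_1 ≤ A and, for all m ≥ 2, a_m ≤ a_{m-1}·(1 − t_{m-1}²·a_{m-1}/A). Then for every m ≥ 1, a_m ≤ A/(1 + ∑_{k=1}^{m-1} t_k²). -/
/-!
The map `x ↦ x (1 - c x / A)` sends `x ≤ A / B` below `A / (B + c)`: clearing denominators,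
`A² - x (A - c x) (B + c) = (A - x B)(A - c x) + (c x)²`, which is nonnegative when `c x ≤ A`,
while for `c x > A` the value `x (1 - c x / A)` is already negative. Induction on `m` then adds
one weight `t k ^ 2` to the denominator per step.
-/

open Finset

theorem mul_one_sub_mul_div_le_div_add {A B c x : ℝ} (hA : 0 < A) (hB : 0 < B) (hc : 0 ≤ c)
    (hx : x ≤ A / B) : x * (1 - c * x / A) ≤ A / (B + c) := by
  rw [le_div_iff₀ hB] at hx
  have hBc : 0 < B + c := by linarith
  rcases le_or_gt (c * x) A with hcx | hcx
  · have hprod : 0 ≤ (A - x * B) * (A - c * x) := mul_nonneg (by linarith) (by linarith)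
    calc x * (1 - c * x / A) = x * (A - c * x) / A := by field_simp
      _ ≤ A / (B + c) := by
        rw [div_le_div_iff₀ hA hBc]
        nlinarith [sq_nonneg (c * x)]
  · have hx_pos : 0 < x := pos_of_mul_pos_right (hA.trans hcx) hc
    have hfactor_neg : 1 - c * x / A < 0 := by rwa [sub_neg, one_lt_div hA]
    exact (mul_neg_of_pos_of_neg hx_pos hfactor_neg).le.trans (by positivity)

theorem le_div_one_add_sum_of_le_mul_one_sub {A : ℝ} (hA : 0 < A) {c a : ℕ → ℝ}
    (hc : ∀ k, 0 ≤ c k) (ha1 : a 1 ≤ A)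
    (harec : ∀ n, a (n + 2) ≤ a (n + 1) * (1 - c (n + 1) * a (n + 1) / A)) (n : ℕ) :
    a (n + 1) ≤ A / (1 + ∑ k ∈ Icc 1 n, c k) := by
  induction n with
  | zero => simpa using ha1
  | succ n ih =>
    have hB : 0 < 1 + ∑ k ∈ Icc 1 n, c k := by
      have := sum_nonneg fun k (_ : k ∈ Icc 1 n) => hc k
      linarith
    rw [sum_Icc_succ_top (by omega), ← add_assoc]
    exact (harec n).trans (mul_one_sub_mul_div_le_div_add hA hB (hc _) ih)

theorem stmt0_general (A : ℝ) (hA : 0 < A) (t : ℕ → ℝ)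
    (a : ℕ → ℝ) (ha1 : a 1 ≤ A)
    (harec : ∀ m, 2 ≤ m → a m ≤ a (m - 1) * (1 - (t (m - 1)) ^ 2 * a (m - 1) / A)) :
    ∀ m, 1 ≤ m → a m ≤ A / (1 + ∑ k ∈ Finset.Icc 1 (m - 1), (t k) ^ 2) := by
  rintro m hm
  obtain ⟨n, rfl⟩ := Nat.exists_eq_add_of_le' hm
  exact le_div_one_add_sum_of_le_mul_one_sub hA (fun k => sq_nonneg (t k)) ha1
    (fun n => harec (n + 2) (by omega)) n

/-- Recursion lemma for sequences of non-negative numbers (Lemma 1):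
if `a 1 ≤ A` and `a m ≤ a (m-1) * (1 - t (m-1)^2 * a (m-1) / A)` for `m ≥ 2`,
with `t 1 = 1` and `0 < t k ≤ 1`, then `a m ≤ A / (1 + ∑_{k=1}^{m-1} t k ^ 2)`. -/
theorem stmt0 (A : ℝ) (hA : 0 < A) (t : ℕ → ℝ) (ht1 : t 1 = 1)
    (ht : ∀ k, 1 ≤ k → 0 < t k ∧ t k ≤ 1)
    (a : ℕ → ℝ) (ha_nonneg : ∀ m, 1 ≤ m → 0 ≤ a m) (ha1 : a 1 ≤ A)
    (harec : ∀ m, 2 ≤ m → a m ≤ a (m - 1) * (1 - (t (m - 1)) ^ 2 * a (m - 1) / A)) :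
    ∀ m, 1 ≤ m → a m ≤ A / (1 + ∑ k ∈ Finset.Icc 1 (m - 1), (t k) ^ 2) :=
  stmt0_general A hA t a ha1 harec
end

section
/- Let H be a complex Hilbert space, K a closed subspace of H, f ∈ H, and set g = f − P_K(f), where P_K denotes the orthogonal projection onto K. Let ψ ∈ H with ‖ψ‖ = 1 and v := ‖ψ − P_K(ψ)‖ > 0. Let K' be the smallest closed subspace containing K and ψ, and set g' = f − P_{K'}(f). Then ‖g'‖² = ‖g‖² − |⟨g, ψ⟩|²/v². -/
/-!
Write `u = ψ - P_K ψ`. Since `P_K ψ ∈ K`, adjoining `ψ` to `K` is the same as adjoining `u`, and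
`u ⟂ K`; so the projection onto `K'` splits as `P_K + P_{ℂ u}`, and the new residual is
`g - P_{ℂ u} g`. Pythagoras gives `‖g'‖² = ‖g‖² - ‖P_{ℂ u} g‖² = ‖g‖² - |⟨g, u⟩|² / ‖u‖²`, and
`⟨g, u⟩ = ⟨g, ψ⟩` because `g ⟂ K`.
-/

open scoped InnerProductSpace

namespace Submodule

theorem sup_span_singleton_sub_of_mem {R M : Type*} [Ring R] [AddCommGroup M] [Module R M]
    (K : Submodule R M) {k : M} (hk : k ∈ K) (x : M) :
    K ⊔ span R {x - k} = K ⊔ span R {x} := by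
  refine le_antisymm (sup_le le_sup_left ?_) (sup_le le_sup_left ?_) <;>
    rw [span_singleton_le_iff_mem]
  · exact sub_mem (mem_sup_right (mem_span_singleton_self x)) (mem_sup_left hk)
  · simpa using add_mem (mem_sup_right (mem_span_singleton_self (x - k))) (mem_sup_left hk)

variable {𝕜 E : Type*} [RCLike 𝕜] [NormedAddCommGroup E] [InnerProductSpace 𝕜 E]

theorem IsOrtho.starProjection_eq_add {U V L : Submodule 𝕜 E} [U.HasOrthogonalProjection]
    [V.HasOrthogonalProjection] [L.HasOrthogonalProjection] (h : U ⟂ V)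
    (hL : L = (U ⊔ V).topologicalClosure) (x : E) :
    L.starProjection x = U.starProjection x + V.starProjection x := by
  subst hL
  have hmem : U.starProjection x + V.starProjection x ∈ U ⊔ V :=
    add_mem (mem_sup_left (starProjection_apply_mem U x))
      (mem_sup_right (starProjection_apply_mem V x))
  refine eq_starProjection_of_mem_orthogonal (le_topologicalClosure _ hmem) ?_
  rw [orthogonal_closure, ← inf_orthogonal, mem_inf, sub_add_eq_sub_sub]
  constructor
  · exact sub_mem (sub_starProjection_mem_orthogonal x) (h.symm (starProjection_apply_mem V x))
  · rw [sub_right_comm]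
    exact sub_mem (sub_starProjection_mem_orthogonal x) (h (starProjection_apply_mem U x))

theorem norm_starProjection_span_singleton_sq (u x : E) :
    ‖(𝕜 ∙ u).starProjection x‖ ^ 2 = ‖⟪u, x⟫_𝕜‖ ^ 2 / ‖u‖ ^ 2 := by
  rcases eq_or_ne u 0 with rfl | hu
  · simp
  have hu' : ‖u‖ ≠ 0 := norm_ne_zero_iff.mpr hu
  rw [starProjection_singleton, norm_smul, norm_div, RCLike.norm_ofReal,
    abs_of_nonneg (by positivity)]
  field_simp

theorem norm_sub_starProjection_sq_of_mem_orthogonal (K L : Submodule 𝕜 E)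
    [K.HasOrthogonalProjection] [L.HasOrthogonalProjection] {u : E} (hu : u ∈ Kᗮ)
    (hL : L = (K ⊔ 𝕜 ∙ u).topologicalClosure) (x : E) :
    ‖x - L.starProjection x‖ ^ 2
      = ‖x - K.starProjection x‖ ^ 2 - ‖⟪x - K.starProjection x, u⟫_𝕜‖ ^ 2 / ‖u‖ ^ 2 := by
  set g := x - K.starProjection x
  have hKu : K ⟂ (𝕜 ∙ u) := IsOrtho.symm ((span_singleton_le_iff_mem u Kᗮ).mpr hu)
  have hinner : ⟪u, x⟫_𝕜 = ⟪u, g⟫_𝕜 := by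
    rw [inner_sub_right, inner_eq_zero_symm.mp (hu _ (starProjection_apply_mem K x)), sub_zero]
  have hresidual : x - L.starProjection x = g - (𝕜 ∙ u).starProjection g := by
    rw [hKu.starProjection_eq_add hL, starProjection_singleton, starProjection_singleton, hinner,
      sub_add_eq_sub_sub]
  have hpyth := norm_sq_eq_add_norm_sq_starProjection g (𝕜 ∙ u)
  rw [starProjection_orthogonal_val, norm_starProjection_span_singleton_sq, norm_inner_symm]
    at hpyth
  rw [hresidual]
  linarith

end Submodule

open Submodule in
theorem stmt2_general {H : Type*} [NormedAddCommGroup H] [InnerProductSpace ℂ H]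
    (K : Submodule ℂ H) [CompleteSpace K] (f ψ : H)
    (K' : Submodule ℂ H) [CompleteSpace K']
    (hK' : K' = (K ⊔ Submodule.span ℂ {ψ}).topologicalClosure) :
    ‖f - (K'.orthogonalProjectionOnto f : H)‖ ^ 2
      = ‖f - (K.orthogonalProjectionOnto f : H)‖ ^ 2
        - ‖(inner ℂ (f - (K.orthogonalProjectionOnto f : H)) ψ : ℂ)‖ ^ 2
            / ‖ψ - (K.orthogonalProjectionOnto ψ : H)‖ ^ 2 := by
  have hK'u : K' = (K ⊔ ℂ ∙ (ψ - K.starProjection ψ)).topologicalClosure := by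
    rw [hK', sup_span_singleton_sub_of_mem K (starProjection_apply_mem K ψ)]
  have hinner : ⟪f - K.starProjection f, ψ⟫_ℂ
      = ⟪f - K.starProjection f, ψ - K.starProjection ψ⟫_ℂ := by
    rw [inner_sub_right (y := ψ), inner_eq_zero_symm.mp
      (sub_starProjection_mem_orthogonal f _ (starProjection_apply_mem K ψ)), sub_zero]
  simpa only [coe_orthogonalProjectionOnto_apply, hinner] using
    norm_sub_starProjection_sq_of_mem_orthogonal K K' (sub_starProjection_mem_orthogonal ψ) hK'u f

/-- One-step energy identity of the weak orthogonal greedy algorithm: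
with `g = f - P_K f`, `‖ψ‖ = 1`, `v = ‖ψ - P_K ψ‖ > 0`, and `K'` the smallest closed
subspace containing `K` and `ψ`, the residual `g' = f - P_{K'} f` satisfies
`‖g'‖² = ‖g‖² - |⟨g, ψ⟩|² / v²`. -/
theorem stmt2 {H : Type*} [NormedAddCommGroup H] [InnerProductSpace ℂ H] [CompleteSpace H]
    (K : Submodule ℂ H) [CompleteSpace K] (f ψ : H) (hψ : ‖ψ‖ = 1)
    (hv : 0 < ‖ψ - (K.orthogonalProjectionOnto ψ : H)‖)
    (K' : Submodule ℂ H) [CompleteSpace K']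
    (hK' : K' = (K ⊔ Submodule.span ℂ {ψ}).topologicalClosure) :
    ‖f - (K'.orthogonalProjectionOnto f : H)‖ ^ 2
      = ‖f - (K.orthogonalProjectionOnto f : H)‖ ^ 2
        - ‖(inner ℂ (f - (K.orthogonalProjectionOnto f : H)) ψ : ℂ)‖ ^ 2
            / ‖ψ - (K.orthogonalProjectionOnto ψ : H)‖ ^ 2 :=
  stmt2_general K f ψ K' hK'
end

section
/- Let H be a complex Hilbert space, D a dictionary (a set of unit vectors whose closed linear span equals H), and M > 0. Let f ∈ H(D,M), i.e., f = ∑_{j=1}^∞ c_j ψ̃_j converging in H with ψ̃_j ∈ D and ∑_{j=1}^∞ |c_j| ≤ M. Let K be a closed subspace of H, g = f − P_K(f), and let t ∈ (0,1]. Suppose ψ ∈ D satisfies v := ‖ψ − P_K(ψ)‖ > 0 and |⟨g, ψ⟩| ≥ t·sup_{φ∈D} |⟨g, φ⟩|. Let K' be the smallest closed subspace containing K and ψ, and g' = f − P_{K'}(f). Then ‖g'‖² ≤ ‖g‖²·(1 − (t/v)²·‖g‖²/M²). -/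
/-!
With `g = f - P_K f` and `S = sup_{φ ∈ D} |⟨g, φ⟩|`, expanding `f` in the dictionary gives
`‖g‖² = ⟨g, f⟩ ≤ M S`, while the greedy choice gives `t S ≤ |⟨g, ψ⟩|`. Since `K'` contains
`P_K f` and `ψ - P_K ψ`, the residual `g'` is no longer than `g` minus its projection onto the
line through `ψ - P_K ψ`, whose squared length is `|⟨g, ψ⟩|² / ‖ψ - P_K ψ‖²`.
-/

open scoped InnerProductSpace

section

variable {𝕜 E : Type*} [RCLike 𝕜] [NormedAddCommGroup E] [InnerProductSpace 𝕜 E]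

namespace Submodule

theorem norm_sub_starProjection_le_of_mem (K : Submodule 𝕜 E) [K.HasOrthogonalProjection]
    (f : E) {p : E} (hp : p ∈ K) : ‖f - K.starProjection f‖ ≤ ‖f - p‖ := by
  rw [starProjection_minimal]
  exact ciInf_le ⟨0, Set.forall_mem_range.mpr fun _ => norm_nonneg _⟩ (⟨p, hp⟩ : K)

theorem norm_sub_starProjection_singleton_sq (e g : E) :
    ‖g - (𝕜 ∙ e).starProjection g‖ ^ 2 = ‖g‖ ^ 2 - ‖⟪e, g⟫_𝕜‖ ^ 2 / ‖e‖ ^ 2 := by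
  have hproj : ‖(𝕜 ∙ e).starProjection g‖ ^ 2 = ‖⟪e, g⟫_𝕜‖ ^ 2 / ‖e‖ ^ 2 := by
    rcases eq_or_ne e 0 with rfl | he
    · simp
    rw [starProjection_singleton, norm_smul, norm_div, RCLike.norm_ofReal,
      abs_of_nonneg (by positivity)]
    field_simp
  rw [← hproj, norm_sq_eq_add_norm_sq_starProjection g (𝕜 ∙ e), starProjection_orthogonal_val]
  ring

theorem norm_sub_starProjection_sq_le_of_le_of_mem {K K' : Submodule 𝕜 E}
    [K.HasOrthogonalProjection] [K'.HasOrthogonalProjection] (hKK' : K ≤ K') {ψ : E}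
    (hψ : ψ ∈ K') (f : E) :
    ‖f - K'.starProjection f‖ ^ 2 ≤ ‖f - K.starProjection f‖ ^ 2
      - ‖⟪f - K.starProjection f, ψ⟫_𝕜‖ ^ 2 / ‖ψ - K.starProjection ψ‖ ^ 2 := by
  set g := f - K.starProjection f
  set e := ψ - K.starProjection ψ
  have hgK : g ∈ Kᗮ := K.sub_starProjection_mem_orthogonal f
  have heg : ⟪e, g⟫_𝕜 = ⟪ψ, g⟫_𝕜 := by
    rw [inner_sub_left, inner_right_of_mem_orthogonal (K.starProjection_apply_mem ψ) hgK,
      sub_zero]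
  have hp : K.starProjection f + (𝕜 ∙ e).starProjection g ∈ K' := by
    refine K'.add_mem (hKK' (K.starProjection_apply_mem f)) ?_
    refine span_singleton_le_iff_mem e K' |>.mpr ?_ ((𝕜 ∙ e).starProjection_apply_mem g)
    exact K'.sub_mem hψ (hKK' (K.starProjection_apply_mem ψ))
  calc ‖f - K'.starProjection f‖ ^ 2
      ≤ ‖f - (K.starProjection f + (𝕜 ∙ e).starProjection g)‖ ^ 2 := by
        gcongr
        exact K'.norm_sub_starProjection_le_of_mem f hp
    _ = ‖g - (𝕜 ∙ e).starProjection g‖ ^ 2 := by rw [sub_add_eq_sub_sub]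
    _ = ‖g‖ ^ 2 - ‖⟪g, ψ⟫_𝕜‖ ^ 2 / ‖e‖ ^ 2 := by
        rw [norm_sub_starProjection_singleton_sq, heg, norm_inner_symm]

theorem norm_sub_starProjection_sq_eq_norm_inner (K : Submodule 𝕜 E)
    [K.HasOrthogonalProjection] (f : E) :
    ‖f - K.starProjection f‖ ^ 2 = ‖⟪f - K.starProjection f, f⟫_𝕜‖ := by
  have hg : ⟪f - K.starProjection f, K.starProjection f⟫_𝕜 = 0 :=
    inner_left_of_mem_orthogonal (K.starProjection_apply_mem f)
      (K.sub_starProjection_mem_orthogonal f)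
  rw [← sub_zero ⟪_, f⟫_𝕜, ← hg, ← inner_sub_right, inner_self_eq_norm_sq_to_K, norm_pow,
    RCLike.norm_ofReal, abs_norm]

end Submodule

section Dictionary

variable {D : Set E}

theorem norm_inner_le_iSup_of_norm_eq_one (hD : ∀ φ ∈ D, ‖φ‖ = 1) (g : E) {φ : E}
    (hφ : φ ∈ D) : ‖⟪g, φ⟫_𝕜‖ ≤ ⨆ φ : D, ‖⟪g, (φ : E)⟫_𝕜‖ := by
  refine le_ciSup (f := fun φ : D => ‖⟪g, (φ : E)⟫_𝕜‖) ⟨‖g‖, ?_⟩ ⟨φ, hφ⟩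
  rintro _ ⟨φ, rfl⟩
  simpa [hD φ φ.2] using norm_inner_le_norm (𝕜 := 𝕜) g (φ : E)

theorem norm_inner_le_tsum_mul_iSup {ι : Type*} (hD : ∀ φ ∈ D, ‖φ‖ = 1) {c : ι → 𝕜}
    {ψ : ι → E} (hψ : ∀ j, ψ j ∈ D) {f : E} (hf : HasSum (fun j => c j • ψ j) f)
    (hc : Summable fun j => ‖c j‖) (g : E) :
    ‖⟪g, f⟫_𝕜‖ ≤ (∑' j, ‖c j‖) * ⨆ φ : D, ‖⟪g, (φ : E)⟫_𝕜‖ := by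
  have hinner : HasSum (fun j => c j * ⟪g, ψ j⟫_𝕜) ⟪g, f⟫_𝕜 := by
    simpa using (innerSL 𝕜 g).hasSum hf
  refine hinner.norm_le_of_bounded (hc.hasSum.mul_right _) fun j => ?_
  rw [norm_mul]
  gcongr
  exact norm_inner_le_iSup_of_norm_eq_one hD g (hψ j)

end Dictionary

end

theorem stmt3_general {H : Type*} [NormedAddCommGroup H] [InnerProductSpace ℂ H]
    (D : Set H) (hD_unit : ∀ φ ∈ D, ‖φ‖ = 1)
    (M : ℝ)
    (c : ℕ → ℂ) (ψt : ℕ → H) (hψt : ∀ j, ψt j ∈ D)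
    (f : H) (hf : HasSum (fun j => c j • ψt j) f)
    (hc_summable : Summable fun j => ‖c j‖) (hcM : ∑' j, ‖c j‖ ≤ M)
    (K : Submodule ℂ H) [CompleteSpace K]
    (t : ℝ) (ht0 : 0 < t)
    (ψ : H)
    (hsel : t * ⨆ φ : D, ‖(inner ℂ (f - (K.orthogonalProjectionOnto f : H)) (φ : H) : ℂ)‖
        ≤ ‖(inner ℂ (f - (K.orthogonalProjectionOnto f : H)) ψ : ℂ)‖)
    (K' : Submodule ℂ H) [CompleteSpace K']
    (hK' : K' = (K ⊔ Submodule.span ℂ {ψ}).topologicalClosure) :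
    ‖f - (K'.orthogonalProjectionOnto f : H)‖ ^ 2
      ≤ ‖f - (K.orthogonalProjectionOnto f : H)‖ ^ 2
          * (1 - (t / ‖ψ - (K.orthogonalProjectionOnto ψ : H)‖) ^ 2
              * ‖f - (K.orthogonalProjectionOnto f : H)‖ ^ 2 / M ^ 2) := by
  simp only [← Submodule.starProjection_apply] at hsel ⊢
  set g := f - K.starProjection f
  set S := ⨆ φ : D, ‖⟪g, (φ : H)⟫_ℂ‖
  have hKK' : K ≤ K' := hK' ▸ le_sup_left.trans (K ⊔ ℂ ∙ ψ).le_topologicalClosure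
  have hψK' : ψ ∈ K' := hK' ▸ (K ⊔ ℂ ∙ ψ).le_topologicalClosure
    (Submodule.mem_sup_right (Submodule.mem_span_singleton_self ψ))
  have hS : 0 ≤ S := Real.iSup_nonneg fun _ => norm_nonneg _
  have hgMS : ‖g‖ ^ 2 ≤ S * M := by
    rw [K.norm_sub_starProjection_sq_eq_norm_inner f, mul_comm]
    exact (norm_inner_le_tsum_mul_iSup hD_unit hψt hf hc_summable g).trans (by gcongr)
  have hM0 : 0 ≤ M := (tsum_nonneg fun _ => norm_nonneg _).trans hcM
  have hgain : t * ‖g‖ ^ 2 / M ≤ ‖⟪g, ψ⟫_ℂ‖ := by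
    rw [mul_div_assoc]
    exact (mul_le_mul_of_nonneg_left (div_le_of_le_mul₀ hM0 hS hgMS) ht0.le).trans hsel
  calc ‖f - K'.starProjection f‖ ^ 2
      ≤ ‖g‖ ^ 2 - ‖⟪g, ψ⟫_ℂ‖ ^ 2 / ‖ψ - K.starProjection ψ‖ ^ 2 :=
        Submodule.norm_sub_starProjection_sq_le_of_le_of_mem hKK' hψK' f
    _ ≤ ‖g‖ ^ 2 - (t * ‖g‖ ^ 2 / M) ^ 2 / ‖ψ - K.starProjection ψ‖ ^ 2 := by
        gcongr
    _ = _ := by ring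

/-- One-step recursion inequality of WOGA: `D` is a dictionary (unit vectors with dense
span), `f ∈ H(D,M)`, `g = f - P_K f`, `ψ ∈ D` with `v = ‖ψ - P_K ψ‖ > 0` and
`|⟨g,ψ⟩| ≥ t·sup_{φ∈D}|⟨g,φ⟩|`; `K'` the smallest closed subspace containing `K` and `ψ`,
`g' = f - P_{K'} f`. Then `‖g'‖² ≤ ‖g‖²·(1 - (t/v)²·‖g‖²/M²)`. -/
theorem stmt3 {H : Type*} [NormedAddCommGroup H] [InnerProductSpace ℂ H] [CompleteSpace H]
    (D : Set H) (hD_unit : ∀ φ ∈ D, ‖φ‖ = 1)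
    (hD_span : (Submodule.span ℂ D).topologicalClosure = ⊤)
    (M : ℝ) (hM : 0 < M)
    (c : ℕ → ℂ) (ψt : ℕ → H) (hψt : ∀ j, ψt j ∈ D)
    (f : H) (hf : HasSum (fun j => c j • ψt j) f)
    (hc_summable : Summable fun j => ‖c j‖) (hcM : ∑' j, ‖c j‖ ≤ M)
    (K : Submodule ℂ H) [CompleteSpace K]
    (t : ℝ) (ht0 : 0 < t) (ht1 : t ≤ 1)
    (ψ : H) (hψD : ψ ∈ D)
    (hv : 0 < ‖ψ - (K.orthogonalProjectionOnto ψ : H)‖)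
    (hsel : t * ⨆ φ : D, ‖(inner ℂ (f - (K.orthogonalProjectionOnto f : H)) (φ : H) : ℂ)‖
        ≤ ‖(inner ℂ (f - (K.orthogonalProjectionOnto f : H)) ψ : ℂ)‖)
    (K' : Submodule ℂ H) [CompleteSpace K']
    (hK' : K' = (K ⊔ Submodule.span ℂ {ψ}).topologicalClosure) :
    ‖f - (K'.orthogonalProjectionOnto f : H)‖ ^ 2
      ≤ ‖f - (K.orthogonalProjectionOnto f : H)‖ ^ 2
          * (1 - (t / ‖ψ - (K.orthogonalProjectionOnto ψ : H)‖) ^ 2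
              * ‖f - (K.orthogonalProjectionOnto f : H)‖ ^ 2 / M ^ 2) :=
  stmt3_general D hD_unit M c ψt hψt f hf hc_summable hcM K t ht0 ψ hsel K' hK'
end

section
/- Let H be a complex Hilbert space, D a dictionary (a set of unit vectors whose closed linear span equals H), M > 0, and f ∈ H(D,M). Suppose the Weak Orthogonal Greedy Algorithm with weakness parameters t_k ∈ (0,1] produces selections ψ_1, ψ_2, … ∈ D: with H_0 = {0}, H_k = span{ψ_1,…,ψ_k}, residuals f_k = f − P_{H_{k-1}}(f), selection condition |⟨f_k, ψ_k⟩| ≥ t_k·sup_{ψ∈D} |⟨f_k, ψ⟩|, and v_k := ‖ψ_k − P_{H_{k-1}}(ψ_k)‖ > 0. Then for every n ≥ 1, ‖f_n‖ ≤ M·(1 + ∑_{k=1}^{n-1} t_k²)^{-1/2}. -/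
/-!
Write `aₙ = ‖fₙ‖²`. Since `fₙ ⊥ H_{n-1}`, `aₙ = ⟪fₙ, f⟫ ≤ M · sup_{φ ∈ D} |⟪fₙ, φ⟫|`, so the weak
greedy choice gives `tₙ aₙ ≤ M |⟪fₙ, ψₙ⟫|`. As `H_n` contains `P_{H_{n-1}} f + ⟪ψₙ, fₙ⟫ ψₙ`,
`aₙ₊₁ ≤ aₙ - |⟪fₙ, ψₙ⟫|² ≤ aₙ - tₙ² aₙ² / M²`, i.e. `1 / aₙ₊₁ ≥ 1 / aₙ + tₙ² / M²`; together
with `a₁ ≤ ‖f‖² ≤ M²` this yields `(1 + ∑_{k<n} t_k²) aₙ ≤ M²`.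
-/

/-- Orthogonal projection onto (the closure of) a subspace, as a map `H → H`. -/
noncomputable def proj {H : Type*} [NormedAddCommGroup H] [InnerProductSpace ℂ H]
    [CompleteSpace H] (K : Submodule ℂ H) (f : H) : H :=
  haveI : CompleteSpace K.topologicalClosure := K.isClosed_topologicalClosure.completeSpace_coe
  (K.topologicalClosure.orthogonalProjectionOnto f : H)

section Projection

variable {H : Type*} [NormedAddCommGroup H] [InnerProductSpace ℂ H] [CompleteSpace H]

lemma proj_mem_topologicalClosure (K : Submodule ℂ H) (f : H) :
    proj K f ∈ K.topologicalClosure := by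
  have : CompleteSpace K.topologicalClosure := K.isClosed_topologicalClosure.completeSpace_coe
  exact (K.topologicalClosure.orthogonalProjectionOnto f).2

lemma inner_sub_proj_eq_zero (K : Submodule ℂ H) (f : H) {g : H}
    (hg : g ∈ K.topologicalClosure) : inner ℂ (f - proj K f) g = 0 := by
  have : CompleteSpace K.topologicalClosure := K.isClosed_topologicalClosure.completeSpace_coe
  exact Submodule.starProjection_inner_eq_zero f g hg

lemma inner_sub_proj_self (K : Submodule ℂ H) (f : H) :
    inner ℂ (f - proj K f) f = (‖f - proj K f‖ : ℂ) ^ 2 := by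
  calc inner ℂ (f - proj K f) f = inner ℂ (f - proj K f) (f - proj K f + proj K f) := by
        rw [sub_add_cancel]
    _ = (‖f - proj K f‖ : ℂ) ^ 2 := by
        rw [inner_add_right, inner_sub_proj_eq_zero K f (proj_mem_topologicalClosure K f),
          add_zero, inner_self_eq_norm_sq_to_K]
        rfl

lemma norm_sub_proj_le (K : Submodule ℂ H) (f : H) {g : H} (hg : g ∈ K.topologicalClosure) :
    ‖f - proj K f‖ ≤ ‖f - g‖ := by
  have : CompleteSpace K.topologicalClosure := K.isClosed_topologicalClosure.completeSpace_coe
  rw [show proj K f = K.topologicalClosure.starProjection f from rfl,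
    Submodule.starProjection_minimal]
  exact ciInf_le ⟨0, by rintro x ⟨y, rfl⟩; positivity⟩ (⟨g, hg⟩ : K.topologicalClosure)

lemma norm_sub_proj_le_norm (K : Submodule ℂ H) (f : H) : ‖f - proj K f‖ ≤ ‖f‖ := by
  simpa using norm_sub_proj_le K f (zero_mem _)

end Projection

section HilbertSpace

variable {H : Type*} [NormedAddCommGroup H] [InnerProductSpace ℂ H]

lemma norm_sub_inner_smul_sq {ψ : H} (hψ : ‖ψ‖ = 1) (r : H) :
    ‖r - inner ℂ ψ r • ψ‖ ^ 2 = ‖r‖ ^ 2 - ‖inner ℂ r ψ‖ ^ 2 := by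
  have hre : RCLike.re (inner ℂ r (inner ℂ ψ r • ψ)) = ‖inner ℂ r ψ‖ ^ 2 := by
    rw [inner_smul_right, ← inner_conj_symm, mul_comm, Complex.mul_conj', ← Complex.ofReal_pow,
      RCLike.re_to_complex, Complex.ofReal_re]
  rw [norm_sub_sq (𝕜 := ℂ), hre, norm_smul, hψ, mul_one, ← inner_conj_symm, RCLike.norm_conj]
  ring

lemma norm_inner_le_of_hasSum {ι : Type*} {c : ι → ℂ} {φ : ι → H} {f : H}
    (hf : HasSum (fun j => c j • φ j) f) (hc : Summable fun j => ‖c j‖) (g : H) {S : ℝ}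
    (hS : ∀ j, ‖inner ℂ g (φ j)‖ ≤ S) : ‖inner ℂ g f‖ ≤ (∑' j, ‖c j‖) * S := by
  have hterm : ∀ j, ‖inner ℂ g (c j • φ j)‖ ≤ ‖c j‖ * S := fun j => by
    rw [inner_smul_right, norm_mul]
    exact mul_le_mul_of_nonneg_left (hS j) (norm_nonneg _)
  have hsum : Summable fun j => ‖inner ℂ g (c j • φ j)‖ :=
    hc.mul_right S |>.of_nonneg_of_le (fun _ => norm_nonneg _) hterm
  have hinner : HasSum (fun j => inner ℂ g (c j • φ j)) (inner ℂ g f) :=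
    (innerSL ℂ g).hasSum hf
  calc ‖inner ℂ g f‖ = ‖∑' j, inner ℂ g (c j • φ j)‖ := by rw [hinner.tsum_eq]
    _ ≤ ∑' j, ‖c j‖ * S := (norm_tsum_le_tsum_norm hsum).trans
        (hsum.tsum_le_tsum hterm (hc.mul_right S))
    _ = (∑' j, ‖c j‖) * S := tsum_mul_right

lemma norm_le_of_hasSum {ι : Type*} {c : ι → ℂ} {φ : ι → H} {f : H}
    (hφ : ∀ j, ‖φ j‖ = 1) (hf : HasSum (fun j => c j • φ j) f)
    (hc : Summable fun j => ‖c j‖) : ‖f‖ ≤ ∑' j, ‖c j‖ := by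
  have hterm : ∀ j, ‖c j • φ j‖ = ‖c j‖ := fun j => by rw [norm_smul, hφ, mul_one]
  rw [← hf.tsum_eq, ← tsum_congr hterm]
  exact norm_tsum_le_tsum_norm (by simpa only [hterm] using hc)

lemma norm_inner_le_iSup {D : Set H} (hD : ∀ φ ∈ D, ‖φ‖ = 1) (g : H) {φ : H} (hφ : φ ∈ D) :
    ‖inner ℂ g φ‖ ≤ ⨆ φ : D, ‖inner ℂ g (φ : H)‖ := by
  refine le_ciSup (f := fun φ : D => ‖inner ℂ g (φ : H)‖) ⟨‖g‖, ?_⟩ ⟨φ, hφ⟩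
  rintro x ⟨φ, rfl⟩
  simpa [hD φ φ.2] using norm_inner_le_norm (𝕜 := ℂ) g (φ : H)

end HilbertSpace

section Residual

variable {H : Type*} [NormedAddCommGroup H] [InnerProductSpace ℂ H] [CompleteSpace H]

lemma sq_norm_sub_proj_le_of_hasSum {ι : Type*} {c : ι → ℂ} {φ : ι → H} {f : H}
    (hf : HasSum (fun j => c j • φ j) f) (hc : Summable fun j => ‖c j‖) (K : Submodule ℂ H)
    {S : ℝ} (hS : ∀ j, ‖inner ℂ (f - proj K f) (φ j)‖ ≤ S) :
    ‖f - proj K f‖ ^ 2 ≤ (∑' j, ‖c j‖) * S := by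
  have h := norm_inner_le_of_hasSum hf hc (f - proj K f) hS
  rwa [inner_sub_proj_self, norm_pow, Complex.norm_real, norm_norm] at h

lemma sq_norm_sub_proj_le_of_mem {K K' : Submodule ℂ H} (hKK' : K ≤ K') {ψ : H} (hψK' : ψ ∈ K')
    (hψ : ‖ψ‖ = 1) (f : H) :
    ‖f - proj K' f‖ ^ 2 ≤ ‖f - proj K f‖ ^ 2 - ‖inner ℂ (f - proj K f) ψ‖ ^ 2 := by
  set r := f - proj K f
  have hmem : proj K f + inner ℂ ψ r • ψ ∈ K'.topologicalClosure :=
    add_mem (Submodule.topologicalClosure_mono hKK' (proj_mem_topologicalClosure K f))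
      (K'.le_topologicalClosure (K'.smul_mem _ hψK'))
  have hle := norm_sub_proj_le K' f hmem
  rw [← sub_sub] at hle
  rw [← norm_sub_inner_smul_sq hψ r]
  exact pow_le_pow_left₀ (norm_nonneg _) hle 2

lemma mul_sq_norm_sub_proj_le {D : Set H} (hD : ∀ φ ∈ D, ‖φ‖ = 1) {ι : Type*} {c : ι → ℂ}
    {φ : ι → H} (hφ : ∀ j, φ j ∈ D) {f : H} (hf : HasSum (fun j => c j • φ j) f)
    (hc : Summable fun j => ‖c j‖) {M : ℝ} (hcM : ∑' j, ‖c j‖ ≤ M) (K : Submodule ℂ H)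
    {t : ℝ} (ht : 0 ≤ t) {ψ : H}
    (hsel : t * ⨆ φ : D, ‖inner ℂ (f - proj K f) (φ : H)‖ ≤ ‖inner ℂ (f - proj K f) ψ‖) :
    t * ‖f - proj K f‖ ^ 2 ≤ M * ‖inner ℂ (f - proj K f) ψ‖ := by
  set S := ⨆ φ : D, ‖inner ℂ (f - proj K f) (φ : H)‖
  have hS0 : 0 ≤ S := Real.iSup_nonneg fun _ => norm_nonneg _
  have hM : 0 ≤ M := (tsum_nonneg fun _ => norm_nonneg _).trans hcM
  have hres : ‖f - proj K f‖ ^ 2 ≤ M * S :=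
    (sq_norm_sub_proj_le_of_hasSum hf hc K fun j => norm_inner_le_iSup hD _ (hφ j)).trans
      (mul_le_mul_of_nonneg_right hcM hS0)
  calc t * ‖f - proj K f‖ ^ 2 ≤ t * (M * S) := mul_le_mul_of_nonneg_left hres ht
    _ = M * (t * S) := by ring
    _ ≤ M * ‖inner ℂ (f - proj K f) ψ‖ := mul_le_mul_of_nonneg_left hsel hM

end Residual

/-- A division-free form of `1 / a' ≥ 1 / a + T / C`, the step of the induction below. -/
lemma add_mul_le_of_mul_add_mul_sq_le {a a' S T C : ℝ} (ha' : 0 ≤ a') (hT : 0 ≤ T)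
    (hdec : a' ≤ a) (hrec : C * a' + T * a ^ 2 ≤ C * a) (hS : S * a ≤ C) :
    (S + T) * a' ≤ C := by
  rcases (ha'.trans hdec).eq_or_lt with rfl | ha
  · rw [le_antisymm hdec ha', mul_zero]; simpa using hS
  · refine le_of_mul_le_mul_right ?_ ha
    nlinarith [mul_le_mul_of_nonneg_right hS ha',
      mul_le_mul_of_nonneg_left hdec (mul_nonneg hT ha.le)]

lemma one_add_sum_sq_mul_le {a b t : ℕ → ℝ} {M : ℝ} (ha : ∀ n, 0 ≤ a n)
    (ht : ∀ n, 1 ≤ n → 0 ≤ t n)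
    (ha1 : a 1 ≤ M ^ 2) (hdual : ∀ n, 1 ≤ n → t n * a n ≤ M * b n)
    (hstep : ∀ n, 1 ≤ n → a (n + 1) ≤ a n - b n ^ 2) :
    ∀ n, 1 ≤ n → (1 + ∑ k ∈ Finset.Icc 1 (n - 1), t k ^ 2) * a n ≤ M ^ 2 := by
  intro n hn
  induction n, hn using Nat.le_induction with
  | base => simpa using ha1
  | succ n hn ih =>
    have hsum :
        ∑ k ∈ Finset.Icc 1 n, t k ^ 2 = ∑ k ∈ Finset.Icc 1 (n - 1), t k ^ 2 + t n ^ 2 := by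
      obtain ⟨m, rfl⟩ := Nat.exists_eq_add_of_le' hn
      rw [Finset.sum_Icc_succ_top (by omega), Nat.add_sub_cancel]
    have hsq : (t n * a n) ^ 2 ≤ (M * b n) ^ 2 :=
      pow_le_pow_left₀ (mul_nonneg (ht n hn) (ha n)) (hdual n hn) 2
    rw [Nat.add_sub_cancel, hsum, ← add_assoc]
    refine add_mul_le_of_mul_add_mul_sq_le (ha _) (sq_nonneg _) ?_ ?_ ih
    · linarith [hstep n hn, sq_nonneg (b n)]
    · nlinarith [hstep n hn, hsq]

lemma le_div_sqrt_of_mul_sq_le {x M s : ℝ} (hM : 0 ≤ M) (hs : 0 < s)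
    (h : s * x ^ 2 ≤ M ^ 2) : x ≤ M / Real.sqrt s := by
  rw [le_div_iff₀ (Real.sqrt_pos.2 hs)]
  refine le_of_pow_le_pow_left₀ two_ne_zero hM ?_
  rw [mul_pow, Real.sq_sqrt hs.le]
  linarith

theorem stmt5_general {H : Type*} [NormedAddCommGroup H] [InnerProductSpace ℂ H] [CompleteSpace H]
    (D : Set H) (hD_unit : ∀ φ ∈ D, ‖φ‖ = 1)
    (M : ℝ)
    (c : ℕ → ℂ) (ψt : ℕ → H) (hψt : ∀ j, ψt j ∈ D)
    (f : H) (hf : HasSum (fun j => c j • ψt j) f)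
    (hc_summable : Summable fun j => ‖c j‖) (hcM : ∑' j, ‖c j‖ ≤ M)
    (t : ℕ → ℝ) (ht : ∀ k, 1 ≤ k → 0 < t k ∧ t k ≤ 1)
    (ψ : ℕ → H) (hψD : ∀ k, 1 ≤ k → ψ k ∈ D)
    (Hk : ℕ → Submodule ℂ H)
    (hHk : ∀ k, Hk k = Submodule.span ℂ (ψ '' {j | 1 ≤ j ∧ j ≤ k}))
    (fk : ℕ → H) (hfk : ∀ n, 1 ≤ n → fk n = f - proj (Hk (n - 1)) f)
    (hsel : ∀ k, 1 ≤ k →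
      t k * ⨆ φ : D, ‖(inner ℂ (fk k) (φ : H) : ℂ)‖ ≤ ‖(inner ℂ (fk k) (ψ k) : ℂ)‖) :
    ∀ n, 1 ≤ n → ‖fk n‖ ≤
      M / Real.sqrt (1 + ∑ k ∈ Finset.Icc 1 (n - 1), (t k) ^ 2) := by
  have hM : 0 ≤ M := (tsum_nonneg fun _ => norm_nonneg _).trans hcM
  have hbase : ‖fk 1‖ ^ 2 ≤ M ^ 2 := by
    rw [hfk 1 le_rfl]
    refine pow_le_pow_left₀ (norm_nonneg _) ((norm_sub_proj_le_norm _ f).trans ?_) 2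
    exact (norm_le_of_hasSum (fun j => hD_unit _ (hψt j)) hf hc_summable).trans hcM
  have hdual : ∀ n, 1 ≤ n → t n * ‖fk n‖ ^ 2 ≤ M * ‖inner ℂ (fk n) (ψ n)‖ := by
    intro n hn
    have hsel_n := hsel n hn
    rw [hfk n hn] at hsel_n ⊢
    exact mul_sq_norm_sub_proj_le hD_unit hψt hf hc_summable hcM _ (ht n hn).1.le hsel_n
  have hstep : ∀ n, 1 ≤ n →
      ‖fk (n + 1)‖ ^ 2 ≤ ‖fk n‖ ^ 2 - ‖inner ℂ (fk n) (ψ n)‖ ^ 2 := by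
    intro n hn
    have hmono : Hk (n - 1) ≤ Hk n := by
      rw [hHk, hHk]
      exact Submodule.span_mono (Set.image_mono fun j hj => ⟨hj.1, hj.2.trans (Nat.sub_le n 1)⟩)
    have hψ : ψ n ∈ Hk n := hHk n ▸ Submodule.subset_span ⟨n, ⟨hn, le_rfl⟩, rfl⟩
    rw [hfk n hn, hfk (n + 1) (by omega), Nat.add_sub_cancel]
    exact sq_norm_sub_proj_le_of_mem hmono hψ (hD_unit _ (hψD n hn)) f
  intro n hn
  exact le_div_sqrt_of_mul_sq_le hM
    (add_pos_of_pos_of_nonneg one_pos (Finset.sum_nonneg fun _ _ => sq_nonneg _))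
    (one_add_sum_sq_mul_le (a := fun n => ‖fk n‖ ^ 2) (fun _ => sq_nonneg _)
      (fun k hk => (ht k hk).1.le) hbase hdual hstep n hn)

/-- Classical error bound of WOGA: for `f ∈ H(D,M)` and WOGA selections `ψ k` with
weakness parameters `t k`, residuals `fk n = f - P_{H_{n-1}} f`, and
`v k = ‖ψ k - P_{H_{k-1}} ψ k‖ > 0`, one has
`‖fk n‖ ≤ M·(1 + ∑_{k=1}^{n-1} t k²)^{-1/2}`. -/
theorem stmt5 {H : Type*} [NormedAddCommGroup H] [InnerProductSpace ℂ H] [CompleteSpace H]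
    (D : Set H) (hD_unit : ∀ φ ∈ D, ‖φ‖ = 1)
    (hD_span : (Submodule.span ℂ D).topologicalClosure = ⊤)
    (M : ℝ) (hM : 0 < M)
    (c : ℕ → ℂ) (ψt : ℕ → H) (hψt : ∀ j, ψt j ∈ D)
    (f : H) (hf : HasSum (fun j => c j • ψt j) f)
    (hc_summable : Summable fun j => ‖c j‖) (hcM : ∑' j, ‖c j‖ ≤ M)
    (t : ℕ → ℝ) (ht : ∀ k, 1 ≤ k → 0 < t k ∧ t k ≤ 1)
    (ψ : ℕ → H) (hψD : ∀ k, 1 ≤ k → ψ k ∈ D)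
    (Hk : ℕ → Submodule ℂ H)
    (hHk : ∀ k, Hk k = Submodule.span ℂ (ψ '' {j | 1 ≤ j ∧ j ≤ k}))
    (fk : ℕ → H) (hfk : ∀ n, 1 ≤ n → fk n = f - proj (Hk (n - 1)) f)
    (hsel : ∀ k, 1 ≤ k →
      t k * ⨆ φ : D, ‖(inner ℂ (fk k) (φ : H) : ℂ)‖ ≤ ‖(inner ℂ (fk k) (ψ k) : ℂ)‖)
    (hv : ∀ k, 1 ≤ k → 0 < ‖ψ k - proj (Hk (k - 1)) (ψ k)‖) :
    ∀ n, 1 ≤ n → ‖fk n‖ ≤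
      M / Real.sqrt (1 + ∑ k ∈ Finset.Icc 1 (n - 1), (t k) ^ 2) :=
  stmt5_general D hD_unit M c ψt hψt f hf hc_summable hcM t ht ψ hψD Hk hHk fk hfk hsel
end

section
/- Let H be a complex Hilbert space, M > 0, and let f = ∑_{j=1}^∞ c_j ψ̃_j converging in H with ‖ψ̃_j‖ ≤ 1 for all j and ∑_{j=1}^∞ |c_j| ≤ M. Let g ∈ H satisfy ⟨g, f − g⟩ = 0. Let t ∈ (0,1] and r > 0, and let B ∈ H be a unit vector such that |⟨g, B⟩| ≥ (t/r)·sup_{j≥1} |⟨g, ψ̃_j⟩|. Then ‖g − ⟨g, B⟩B‖² ≤ ‖g‖²·(1 − (t/r)²·‖g‖²/M²). -/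
/-!
Since `g ⊥ f - g`, we have `‖g‖² = ⟨g, f⟩ = ∑ c_j ⟨g, ψ̃_j⟩ ≤ M · sup_j |⟨g, ψ̃_j⟩|`, so the selection
rule gives `|⟨g, B⟩| ≥ (t/r)·‖g‖²/M`. Subtracting the projection onto the unit vector `B` removes
exactly `|⟨g, B⟩|²` from `‖g‖²` (Pythagoras).
-/

open scoped InnerProductSpace

section

variable {𝕜 E ι : Type*} [RCLike 𝕜] [NormedAddCommGroup E] [InnerProductSpace 𝕜 E]

theorem norm_sub_inner_smul_sq_of_norm_eq_one {B : E} (hB : ‖B‖ = 1) (g : E) :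
    ‖g - ⟪B, g⟫_𝕜 • B‖ ^ 2 = ‖g‖ ^ 2 - ‖⟪B, g⟫_𝕜‖ ^ 2 := by
  rw [@norm_sub_sq 𝕜, inner_smul_right, ← inner_conj_symm g B, RCLike.mul_conj, norm_smul, hB,
    mul_one, ← RCLike.ofReal_pow, RCLike.ofReal_re]
  ring

theorem inner_eq_norm_sq_of_inner_sub_eq_zero {g f : E} (hg : ⟪g, f - g⟫_𝕜 = 0) :
    ⟪g, f⟫_𝕜 = (‖g‖ : 𝕜) ^ 2 := by
  rw [inner_sub_right, sub_eq_zero] at hg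
  rw [hg, inner_self_eq_norm_sq_to_K]

theorem bddAbove_range_norm_inner_of_norm_le_one {ψ : ι → E} (hψ : ∀ j, ‖ψ j‖ ≤ 1) (g : E) :
    BddAbove (Set.range fun j => ‖⟪g, ψ j⟫_𝕜‖) := by
  refine ⟨‖g‖, Set.forall_mem_range.2 fun j => ?_⟩
  calc ‖⟪g, ψ j⟫_𝕜‖ ≤ ‖g‖ * ‖ψ j‖ := norm_inner_le_norm _ _
    _ ≤ ‖g‖ := mul_le_of_le_one_right (norm_nonneg g) (hψ j)

theorem norm_inner_le_tsum_norm_mul_iSup {c : ι → 𝕜} {ψ : ι → E} {f : E}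
    (hf : HasSum (fun j => c j • ψ j) f) (hc : Summable fun j => ‖c j‖) (g : E)
    (hbdd : BddAbove (Set.range fun j => ‖⟪g, ψ j⟫_𝕜‖)) :
    ‖⟪g, f⟫_𝕜‖ ≤ (∑' j, ‖c j‖) * ⨆ j, ‖⟪g, ψ j⟫_𝕜‖ := by
  have hinner : HasSum (fun j => c j * ⟪g, ψ j⟫_𝕜) ⟪g, f⟫_𝕜 := by
    simpa only [innerSL_apply_apply, inner_smul_right] using (innerSL 𝕜 g).hasSum hf
  refine hinner.norm_le_of_bounded (hc.hasSum.mul_right _) fun j => ?_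
  rw [norm_mul]
  exact mul_le_mul_of_nonneg_left (le_ciSup hbdd j) (norm_nonneg _)

end

theorem stmt8_general {H : Type*} [NormedAddCommGroup H] [InnerProductSpace ℂ H]
    (M : ℝ) (c : ℕ → ℂ) (ψt : ℕ → H) (hψt : ∀ j, ‖ψt j‖ ≤ 1)
    (f : H) (hf : HasSum (fun j => c j • ψt j) f)
    (hc_summable : Summable fun j => ‖c j‖) (hcM : ∑' j, ‖c j‖ ≤ M)
    (g : H) (hg : (inner ℂ g (f - g) : ℂ) = 0)
    (t r : ℝ) (ht0 : 0 < t) (hr : 0 < r)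
    (B : H) (hB : ‖B‖ = 1)
    (hsel : (t / r) * ⨆ j, ‖(inner ℂ g (ψt j) : ℂ)‖ ≤ ‖(inner ℂ g B : ℂ)‖) :
    ‖g - (inner ℂ B g : ℂ) • B‖ ^ 2
      ≤ ‖g‖ ^ 2 * (1 - (t / r) ^ 2 * ‖g‖ ^ 2 / M ^ 2) := by
  set s := ⨆ j, ‖(inner ℂ g (ψt j) : ℂ)‖
  have hs : 0 ≤ s := Real.iSup_nonneg fun j => norm_nonneg _
  have hM : 0 ≤ M := (tsum_nonneg fun j => norm_nonneg (c j)).trans hcM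
  have hgs : ‖g‖ ^ 2 ≤ M * s := by
    have := norm_inner_le_tsum_norm_mul_iSup hf hc_summable g
      (bddAbove_range_norm_inner_of_norm_le_one hψt g)
    rw [inner_eq_norm_sq_of_inner_sub_eq_zero hg] at this
    simpa using this.trans (mul_le_mul_of_nonneg_right hcM hs)
  have hlow : (t / r) * ‖g‖ ^ 2 / M ≤ ‖(inner ℂ B g : ℂ)‖ := by
    rw [norm_inner_symm]
    refine div_le_of_le_mul₀ hM (norm_nonneg _) (le_trans ?_ (mul_le_mul_of_nonneg_right hsel hM))
    rw [mul_assoc, mul_comm s]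
    exact mul_le_mul_of_nonneg_left hgs (div_pos ht0 hr).le
  have hsq := pow_le_pow_left₀ (by positivity) hlow 2
  rw [norm_sub_inner_smul_sq_of_norm_eq_one hB]
  calc ‖g‖ ^ 2 - ‖(inner ℂ B g : ℂ)‖ ^ 2 ≤ ‖g‖ ^ 2 - ((t / r) * ‖g‖ ^ 2 / M) ^ 2 := by linarith
    _ = ‖g‖ ^ 2 * (1 - (t / r) ^ 2 * ‖g‖ ^ 2 / M ^ 2) := by ring

/-- One-step recursion inequality of WPre-OGA: with `f = ∑ c j • ψt j`, `‖ψt j‖ ≤ 1`,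
`∑|c j| ≤ M`, `⟨g, f-g⟩ = 0`, `t ∈ (0,1]`, `r > 0`, and a unit vector `B` with
`|⟨g,B⟩| ≥ (t/r)·sup_j |⟨g, ψt j⟩|`, one has
`‖g - ⟨g,B⟩B‖² ≤ ‖g‖²·(1 - (t/r)²·‖g‖²/M²)`.
(Here `⟨g,B⟩`, linear in the first argument, is Mathlib's `inner B g`.) -/
theorem stmt8 {H : Type*} [NormedAddCommGroup H] [InnerProductSpace ℂ H] [CompleteSpace H]
    (M : ℝ) (hM : 0 < M) (c : ℕ → ℂ) (ψt : ℕ → H) (hψt : ∀ j, ‖ψt j‖ ≤ 1)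
    (f : H) (hf : HasSum (fun j => c j • ψt j) f)
    (hc_summable : Summable fun j => ‖c j‖) (hcM : ∑' j, ‖c j‖ ≤ M)
    (g : H) (hg : (inner ℂ g (f - g) : ℂ) = 0)
    (t r : ℝ) (ht0 : 0 < t) (ht1 : t ≤ 1) (hr : 0 < r)
    (B : H) (hB : ‖B‖ = 1)
    (hsel : (t / r) * ⨆ j, ‖(inner ℂ g (ψt j) : ℂ)‖ ≤ ‖(inner ℂ g B : ℂ)‖) :
    ‖g - (inner ℂ B g : ℂ) • B‖ ^ 2
      ≤ ‖g‖ ^ 2 * (1 - (t / r) ^ 2 * ‖g‖ ^ 2 / M ^ 2) :=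
  stmt8_general M c ψt hψt f hf hc_summable hcM g hg t r ht0 hr B hB hsel
end

section
/- Let H be a complex Hilbert space, N > 0, and let f = ∑_{k=1}^∞ d_k φ_k converging in H with ‖φ_k‖ ≤ 1 for all k and ∑_{k=1}^∞ |d_k| ≤ N. Let (B_n)_{n≥1} be an orthonormal sequence in H and define f_n = f − ∑_{j=1}^{n-1} ⟨f, B_j⟩B_j. Suppose that for every n ≥ 1 and every k ≥ 1, |⟨f_n, φ_k⟩| ≤ |⟨f_n, B_n⟩|. Then for every n ≥ 1, ‖f_n‖ ≤ N/√n. -/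
/-!
`f_n` is the residual of `f` after orthogonal projection onto `span {B_1, …, B_{n-1}}`, so
`‖f_n‖² = ⟨f, f_n⟩`. Expanding `f = ∑ d_k φ_k` and using the selection rule gives
`‖f_n‖² ≤ N a_n` with `a_n = |⟨f_n, B_n⟩|`, while Pythagoras gives `‖f_n‖² = ‖f_{n+1}‖² + a_n²`.
Hence `x_n = ‖f_n‖²` satisfies `x_n² ≤ N² (x_n - x_{n+1})`, and every nonnegative sequence with
this decay has `x_n ≤ N² / n`.
-/

open scoped InnerProductSpace

section OrthoResidual

variable (𝕜 : Type*) {E ι κ : Type*} [RCLike 𝕜] [NormedAddCommGroup E] [InnerProductSpace 𝕜 E]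

def orthoResidual (v : ι → E) (s : Finset ι) (f : E) : E :=
  f - ∑ i ∈ s, ⟪v i, f⟫_𝕜 • v i

variable {𝕜} {v : ι → E} {s : Finset ι} {f : E}

theorem orthonormal_finset_of_forall (hunit : ∀ i ∈ s, ‖v i‖ = 1)
    (horth : ∀ i ∈ s, ∀ j ∈ s, i ≠ j → ⟪v i, v j⟫_𝕜 = 0) :
    Orthonormal 𝕜 (fun i : s => v i) :=
  ⟨fun i => hunit i i.2, fun i j hij => horth i i.2 j j.2 (Subtype.coe_injective.ne hij)⟩

theorem inner_orthoResidual_eq_zero (hv : Orthonormal 𝕜 (fun i : s => v i)) {j : ι} (hj : j ∈ s) :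
    ⟪v j, orthoResidual 𝕜 v s f⟫_𝕜 = 0 := by
  have hsum : ⟪v j, ∑ i ∈ s, ⟪v i, f⟫_𝕜 • v i⟫_𝕜 = ⟪v j, f⟫_𝕜 := by
    rw [← Finset.sum_coe_sort s]
    exact hv.inner_right_fintype (fun i : s => ⟪v i, f⟫_𝕜) ⟨j, hj⟩
  rw [orthoResidual, inner_sub_right, hsum, sub_self]

theorem inner_orthoResidual_self (hv : Orthonormal 𝕜 (fun i : s => v i)) :
    ⟪orthoResidual 𝕜 v s f, orthoResidual 𝕜 v s f⟫_𝕜 = ⟪orthoResidual 𝕜 v s f, f⟫_𝕜 := by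
  nth_rewrite 2 [orthoResidual]
  rw [inner_sub_right, inner_sum, Finset.sum_eq_zero fun i hi => ?_, sub_zero]
  rw [inner_smul_right, inner_eq_zero_symm.1 (inner_orthoResidual_eq_zero hv hi), mul_zero]

theorem norm_sq_orthoResidual_eq_add [DecidableEq ι] {j : ι} (hj : j ∉ s)
    (hv : Orthonormal 𝕜 (fun i : (insert j s : Finset ι) => v i)) :
    ‖orthoResidual 𝕜 v s f‖ ^ 2 =
      ‖orthoResidual 𝕜 v (insert j s) f‖ ^ 2 + ‖⟪orthoResidual 𝕜 v s f, v j⟫_𝕜‖ ^ 2 := by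
  have hperp : ⟪orthoResidual 𝕜 v (insert j s) f, v j⟫_𝕜 = 0 :=
    inner_eq_zero_symm.1 (inner_orthoResidual_eq_zero hv (Finset.mem_insert_self j s))
  have hunit : ‖v j‖ = 1 := hv.1 ⟨j, Finset.mem_insert_self j s⟩
  have hdecomp : orthoResidual 𝕜 v s f = orthoResidual 𝕜 v (insert j s) f + ⟪v j, f⟫_𝕜 • v j := by
    rw [orthoResidual, orthoResidual, Finset.sum_insert hj]
    abel
  have hcoeff : ‖⟪orthoResidual 𝕜 v s f, v j⟫_𝕜‖ = ‖⟪v j, f⟫_𝕜‖ := by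
    rw [hdecomp, inner_add_left, inner_smul_left, hperp, zero_add,
      inner_self_eq_one_of_norm_eq_one hunit, mul_one, RCLike.norm_conj]
  rw [hcoeff, hdecomp, sq, sq, sq, norm_add_sq_eq_norm_sq_add_norm_sq_of_inner_eq_zero _ _
    (by rw [inner_smul_right, hperp, mul_zero]), norm_smul, hunit, mul_one]

theorem norm_inner_le_tsum_mul_of_hasSum {d : κ → 𝕜} {φ : κ → E} {g : E}
    (hf : HasSum (fun k => d k • φ k) f) (hd : Summable fun k => ‖d k‖) {a : ℝ}
    (ha : ∀ k, ‖⟪g, φ k⟫_𝕜‖ ≤ a) :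
    ‖⟪g, f⟫_𝕜‖ ≤ (∑' k, ‖d k‖) * a := by
  have hbound : ∀ k, ‖⟪g, d k • φ k⟫_𝕜‖ ≤ ‖d k‖ * a := fun k => by
    rw [inner_smul_right, norm_mul]
    exact mul_le_mul_of_nonneg_left (ha k) (norm_nonneg _)
  have hsummable : Summable fun k => ‖⟪g, d k • φ k⟫_𝕜‖ :=
    .of_nonneg_of_le (fun _ => norm_nonneg _) hbound (hd.mul_right a)
  have hsum : HasSum (fun k => ⟪g, d k • φ k⟫_𝕜) ⟪g, f⟫_𝕜 := hf.mapL (innerSL 𝕜 g)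
  calc ‖⟪g, f⟫_𝕜‖ = ‖∑' k, ⟪g, d k • φ k⟫_𝕜‖ := by rw [hsum.tsum_eq]
    _ ≤ ∑' k, ‖⟪g, d k • φ k⟫_𝕜‖ := norm_tsum_le_tsum_norm hsummable
    _ ≤ ∑' k, ‖d k‖ * a := hsummable.tsum_le_tsum hbound (hd.mul_right a)
    _ = (∑' k, ‖d k‖) * a := tsum_mul_right

theorem norm_sq_orthoResidual_le (hv : Orthonormal 𝕜 (fun i : s => v i)) {d : κ → 𝕜} {φ : κ → E}
    (hf : HasSum (fun k => d k • φ k) f) (hd : Summable fun k => ‖d k‖) {a : ℝ}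
    (ha : ∀ k, ‖⟪orthoResidual 𝕜 v s f, φ k⟫_𝕜‖ ≤ a) :
    ‖orthoResidual 𝕜 v s f‖ ^ 2 ≤ (∑' k, ‖d k‖) * a :=
  calc ‖orthoResidual 𝕜 v s f‖ ^ 2 = ‖⟪orthoResidual 𝕜 v s f, orthoResidual 𝕜 v s f⟫_𝕜‖ := by
        rw [inner_self_eq_norm_sq_to_K, norm_pow, RCLike.norm_ofReal, abs_norm]
    _ = ‖⟪orthoResidual 𝕜 v s f, f⟫_𝕜‖ := by rw [inner_orthoResidual_self hv]
    _ ≤ (∑' k, ‖d k‖) * a := norm_inner_le_tsum_mul_of_hasSum hf hd ha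

theorem sq_norm_sq_orthoResidual_le_mul_sub [DecidableEq ι] {j : ι} (hj : j ∉ s)
    (hv : Orthonormal 𝕜 (fun i : (insert j s : Finset ι) => v i)) {d : κ → 𝕜} {φ : κ → E}
    (hf : HasSum (fun k => d k • φ k) f) (hd : Summable fun k => ‖d k‖) {N : ℝ}
    (hdN : ∑' k, ‖d k‖ ≤ N)
    (hsel : ∀ k, ‖⟪orthoResidual 𝕜 v s f, φ k⟫_𝕜‖ ≤ ‖⟪orthoResidual 𝕜 v s f, v j⟫_𝕜‖) :
    (‖orthoResidual 𝕜 v s f‖ ^ 2) ^ 2 ≤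
      N ^ 2 * (‖orthoResidual 𝕜 v s f‖ ^ 2 - ‖orthoResidual 𝕜 v (insert j s) f‖ ^ 2) := by
  have hvs : Orthonormal 𝕜 (fun i : s => v i) :=
    hv.comp (fun i : s => (⟨i, Finset.mem_insert_of_mem i.2⟩ : (insert j s : Finset ι)))
      fun _ _ h => Subtype.ext (by simpa using h)
  have hgreedy : ‖orthoResidual 𝕜 v s f‖ ^ 2 ≤ N * ‖⟪orthoResidual 𝕜 v s f, v j⟫_𝕜‖ :=
    (norm_sq_orthoResidual_le hvs hf hd hsel).trans
      (mul_le_mul_of_nonneg_right hdN (norm_nonneg _))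
  calc (‖orthoResidual 𝕜 v s f‖ ^ 2) ^ 2 ≤ (N * ‖⟪orthoResidual 𝕜 v s f, v j⟫_𝕜‖) ^ 2 :=
        pow_le_pow_left₀ (by positivity) hgreedy 2
    _ = _ := by rw [norm_sq_orthoResidual_eq_add hj hv]; ring

end OrthoResidual

theorem le_div_of_sq_le_mul_sub {M : ℝ} (hM : 0 ≤ M) {x : ℕ → ℝ} (hx : ∀ n, 0 ≤ x n)
    (h : ∀ n, x n ^ 2 ≤ M * (x n - x (n + 1))) (n : ℕ) : x n ≤ M / (n + 1) := by
  have hle : ∀ n, x n ≤ M := fun n => by nlinarith [h n, hx n, hx (n + 1)]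
  induction n with
  | zero => simpa using hle 0
  | succ n ih =>
    rw [le_div_iff₀ (by positivity)] at ih ⊢
    push_cast
    rcases hM.eq_or_lt with rfl | hMpos
    · simp [le_antisymm (hle (n + 1)) (hx (n + 1))]
    · -- `M² - (n + 2) t (M - t) = (M - (n + 1) t)(M - t) + t²` for `t = x n`
      have hstep : M * (x (n + 1) * (n + 1 + 1)) ≤ M * M := by
        nlinarith [h n, hx n, hle n, mul_nonneg (sub_nonneg.2 ih) (sub_nonneg.2 (hle n))]
      exact le_of_mul_le_mul_left hstep hMpos

theorem stmt11_general {H : Type*} [NormedAddCommGroup H] [InnerProductSpace ℂ H]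
    (N : ℝ) (d : ℕ → ℂ) (φ : ℕ → H)
    (f : H) (hf : HasSum (fun k => d k • φ k) f)
    (hd_summable : Summable fun k => ‖d k‖) (hdN : ∑' k, ‖d k‖ ≤ N)
    (B : ℕ → H) (hB_unit : ∀ n, 1 ≤ n → ‖B n‖ = 1)
    (hB_orth : ∀ m n, 1 ≤ m → 1 ≤ n → m ≠ n → (inner ℂ (B m) (B n) : ℂ) = 0)
    (fn : ℕ → H)
    (hfn : ∀ n, 1 ≤ n →
      fn n = f - ∑ j ∈ Finset.Icc 1 (n - 1), (inner ℂ (B j) f : ℂ) • B j)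
    (hsel : ∀ n, 1 ≤ n → ∀ k, ‖(inner ℂ (fn n) (φ k) : ℂ)‖ ≤ ‖(inner ℂ (fn n) (B n) : ℂ)‖) :
    ∀ n, 1 ≤ n → ‖fn n‖ ≤ N / Real.sqrt n := by
  have hBon : ∀ m, Orthonormal ℂ (fun j : Finset.Icc 1 m => B j) := fun m =>
    orthonormal_finset_of_forall (fun j hj => hB_unit j (Finset.mem_Icc.1 hj).1)
      fun i hi j hj => hB_orth i j (Finset.mem_Icc.1 hi).1 (Finset.mem_Icc.1 hj).1
  have hres : ∀ k, fn (k + 1) = orthoResidual ℂ B (Finset.Icc 1 k) f := fun k => by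
    simpa [orthoResidual] using hfn (k + 1) (Nat.le_add_left 1 k)
  have hdecay : ∀ k, (‖fn (k + 1)‖ ^ 2) ^ 2 ≤
      N ^ 2 * (‖fn (k + 1)‖ ^ 2 - ‖fn (k + 1 + 1)‖ ^ 2) := fun k => by
    have hIcc : insert (k + 1) (Finset.Icc 1 k) = Finset.Icc 1 (k + 1) :=
      Finset.insert_Icc_right_eq_Icc_add_one (by omega)
    have hsel_k := hsel (k + 1) (Nat.le_add_left 1 k)
    rw [hres] at hsel_k
    rw [hres, hres, ← hIcc]
    exact sq_norm_sq_orthoResidual_le_mul_sub (by simp) (hIcc ▸ hBon (k + 1)) hf hd_summable hdN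
      hsel_k
  have hN : 0 ≤ N := (tsum_nonneg fun k => norm_nonneg (d k)).trans hdN
  intro n hn
  obtain ⟨k, rfl⟩ := Nat.exists_eq_add_of_le' hn
  have hk := le_div_of_sq_le_mul_sub (sq_nonneg N) (fun _ => by positivity) hdecay k
  rw [← Real.sqrt_sq (norm_nonneg _), ← Real.sqrt_sq hN, ← Real.sqrt_div' _ (by positivity)]
  exact Real.sqrt_le_sqrt (by exact_mod_cast hk)

/-- Convergence rate of Pre-OGA with maximal selection: `f = ∑ d k • φ k` with
`‖φ k‖ ≤ 1` and `∑|d k| ≤ N`; `(B n)_{n≥1}` an orthonormal sequence;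
`f_n = f - ∑_{j=1}^{n-1} ⟨f, B j⟩ B j`; if for every `n ≥ 1` and every `k`,
`|⟨f_n, φ k⟩| ≤ |⟨f_n, B n⟩|`, then `‖f_n‖ ≤ N/√n` for every `n ≥ 1`.
(Here `⟨x,y⟩`, linear in the first argument, is Mathlib's `inner y x`.) -/
theorem stmt11 {H : Type*} [NormedAddCommGroup H] [InnerProductSpace ℂ H] [CompleteSpace H]
    (N : ℝ) (hN : 0 < N) (d : ℕ → ℂ) (φ : ℕ → H) (hφ : ∀ k, ‖φ k‖ ≤ 1)
    (f : H) (hf : HasSum (fun k => d k • φ k) f)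
    (hd_summable : Summable fun k => ‖d k‖) (hdN : ∑' k, ‖d k‖ ≤ N)
    (B : ℕ → H) (hB_unit : ∀ n, 1 ≤ n → ‖B n‖ = 1)
    (hB_orth : ∀ m n, 1 ≤ m → 1 ≤ n → m ≠ n → (inner ℂ (B m) (B n) : ℂ) = 0)
    (fn : ℕ → H)
    (hfn : ∀ n, 1 ≤ n →
      fn n = f - ∑ j ∈ Finset.Icc 1 (n - 1), (inner ℂ (B j) f : ℂ) • B j)
    (hsel : ∀ n, 1 ≤ n → ∀ k, ‖(inner ℂ (fn n) (φ k) : ℂ)‖ ≤ ‖(inner ℂ (fn n) (B n) : ℂ)‖) :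
    ∀ n, 1 ≤ n → ‖fn n‖ ≤ N / Real.sqrt n :=
  stmt11_general N d φ f hf hd_summable hdN B hB_unit hB_orth fn hfn hsel
end

section
/- Let c : ℤ × ℤ → ℂ be absolutely summable, i.e., ∑_{(k,l)∈ℤ²} |c(k,l)| < ∞, and suppose conj(c(k,l)) = c(−k,−l) for all k, l ∈ ℤ. Then for all real t, s: ∑_{(k,l)∈ℤ²} c(k,l)·e^{i(kt+ls)} = 2·Re(∑_{k≥0, l≥0} c(k,l)·e^{i(kt+ls)}) + 2·Re(∑_{k≥0, l≤0} c(k,l)·e^{i(kt+ls)}) − ∑_{k∈ℤ} c(k,0)·e^{ikt} − ∑_{l∈ℤ} c(0,l)·e^{ils} − c(0,0). -/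
/-- The term `c(k,l)·e^{i(kt+ls)}` of a double Fourier series. -/
noncomputable def fourierTerm (c : ℤ × ℤ → ℂ) (t s : ℝ) (p : ℤ × ℤ) : ℂ :=
  c p * Complex.exp (Complex.I * ((p.1 : ℂ) * (t : ℂ) + (p.2 : ℂ) * (s : ℂ)))

/-!
Split `ℤ × ℤ` into the four closed quadrants. Their indicators add up to one plus the indicators
of the two axes and of the origin, since points of the axes lie in two quadrants and the origin in
all four. As `f (-p) = conj (f p)`, the sums over the third and second quadrants are the conjugates
of those over the first and fourth, so each pair adds up to twice a real part.
-/

open Set Function ComplexConjugate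
open scoped Pointwise

theorem tsum_indicator_neg_eq_star {G R : Type*} [InvolutiveNeg G] [AddCommMonoid R]
    [StarAddMonoid R] [TopologicalSpace R] [ContinuousStar R] [T2Space R] {f : G → R}
    (hf : ∀ p, f (-p) = star (f p)) (S : Set G) :
    ∑' p, (-S).indicator f p = star (∑' p, S.indicator f p) := by
  rw [tsum_star, ← (Equiv.neg G).tsum_eq]
  congr 1 with p
  by_cases hp : p ∈ S <;> simp [hp, hf]

theorem tsum_indicator_range {β γ M : Type*} [AddCommMonoid M] [TopologicalSpace M]
    {g : γ → β} (hg : Injective g) (f : β → M) :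
    ∑' b, (range g).indicator f b = ∑' c, f (g c) := by
  rw [← hg.tsum_eq (support_indicator_subset)]
  simp [indicator_of_mem]

def firstQuadrant : Set (ℤ × ℤ) := {p | 0 ≤ p.1 ∧ 0 ≤ p.2}

def fourthQuadrant : Set (ℤ × ℤ) := {p | 0 ≤ p.1 ∧ p.2 ≤ 0}

theorem indicator_quadrants_add {M : Type*} [AddCommMonoid M] (f : ℤ × ℤ → M) (p : ℤ × ℤ) :
    firstQuadrant.indicator f p + (-firstQuadrant).indicator f p
      + fourthQuadrant.indicator f p + (-fourthQuadrant).indicator f p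
    = f p + (range fun k : ℤ => (k, 0)).indicator f p + (range fun l : ℤ => (0, l)).indicator f p
      + ({0} : Set (ℤ × ℤ)).indicator f p := by
  classical
  obtain ⟨k, l⟩ := p
  simp only [firstQuadrant, fourthQuadrant, indicator_apply, mem_neg, mem_ofPred_eq, mem_range,
    mem_singleton_iff, Prod.ext_iff, Prod.fst_neg, Prod.snd_neg, Prod.fst_zero, Prod.snd_zero,
    exists_eq_left, exists_eq_right]
  split_ifs <;> first | omega | abel

theorem tsum_quadrants_add {E : Type*} [AddCommGroup E] [UniformSpace E] [IsUniformAddGroup E]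
    [CompleteSpace E] [T2Space E] {f : ℤ × ℤ → E} (hf : Summable f) :
    ∑' p, firstQuadrant.indicator f p + ∑' p, (-firstQuadrant).indicator f p
      + ∑' p, fourthQuadrant.indicator f p + ∑' p, (-fourthQuadrant).indicator f p
    = ∑' p, f p + ∑' k : ℤ, f (k, 0) + ∑' l : ℤ, f (0, l) + f 0 := by
  have hquad := (((hf.indicator firstQuadrant).hasSum.add (hf.indicator (-firstQuadrant)).hasSum).add
    (hf.indicator fourthQuadrant).hasSum).add (hf.indicator (-fourthQuadrant)).hasSum
  have haxes := ((hf.hasSum.add (hf.indicator (range fun k : ℤ => (k, 0))).hasSum).add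
    (hf.indicator (range fun l : ℤ => (0, l))).hasSum).add (hf.indicator {0}).hasSum
  simp only [← indicator_quadrants_add] at haxes
  rw [tsum_indicator_range (Prod.mk_left_injective 0),
    tsum_indicator_range (Prod.mk_right_injective 0), ← tsum_subtype, tsum_singleton] at haxes
  exact hquad.unique haxes

theorem two_mul_re_eq_add_conj (z : ℂ) : 2 * ((z.re : ℝ) : ℂ) = z + conj z := by
  rw [Complex.add_conj]
  push_cast
  ring

theorem tsum_eq_two_re_quadrants_sub_axes {f : ℤ × ℤ → ℂ} (hf : Summable f)
    (hconj : ∀ p, f (-p) = conj (f p)) :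
    ∑' p, f p
      = 2 * (((∑' p : {p : ℤ × ℤ // 0 ≤ p.1 ∧ 0 ≤ p.2}, f p.val).re : ℝ) : ℂ)
        + 2 * (((∑' p : {p : ℤ × ℤ // 0 ≤ p.1 ∧ p.2 ≤ 0}, f p.val).re : ℝ) : ℂ)
        - ∑' k : ℤ, f (k, 0) - ∑' l : ℤ, f (0, l) - f 0 := by
  have hsum := tsum_quadrants_add hf
  rw [tsum_indicator_neg_eq_star hconj, tsum_indicator_neg_eq_star hconj] at hsum
  have hfirst : ∑' p : {p : ℤ × ℤ // 0 ≤ p.1 ∧ 0 ≤ p.2}, f p.val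
      = ∑' p, firstQuadrant.indicator f p := tsum_subtype firstQuadrant f
  have hfourth : ∑' p : {p : ℤ × ℤ // 0 ≤ p.1 ∧ p.2 ≤ 0}, f p.val
      = ∑' p, fourthQuadrant.indicator f p := tsum_subtype fourthQuadrant f
  rw [two_mul_re_eq_add_conj, two_mul_re_eq_add_conj, hfirst, hfourth, starRingEnd_apply,
    starRingEnd_apply]
  linear_combination -hsum

theorem fourierTerm_neg {c : ℤ × ℤ → ℂ} (hsym : ∀ k l : ℤ, conj (c (k, l)) = c (-k, -l))
    (t s : ℝ) (p : ℤ × ℤ) : fourierTerm c t s (-p) = conj (fourierTerm c t s p) := by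
  obtain ⟨k, l⟩ := p
  simp only [fourierTerm, Prod.neg_mk, map_mul, ← Complex.exp_conj, hsym, map_add, Complex.conj_I,
    Complex.conj_ofReal, map_intCast]
  push_cast
  ring_nf

section FourierTerm

variable (c : ℤ × ℤ → ℂ) (t s : ℝ)

theorem norm_fourierTerm (p : ℤ × ℤ) : ‖fourierTerm c t s p‖ = ‖c p‖ := by
  simp [fourierTerm, Complex.norm_exp]

theorem fourierTerm_mk_zero (k : ℤ) :
    fourierTerm c t s (k, 0) = c (k, 0) * Complex.exp (Complex.I * k * t) := by
  simp [fourierTerm, mul_assoc]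

theorem fourierTerm_zero_mk (l : ℤ) :
    fourierTerm c t s (0, l) = c (0, l) * Complex.exp (Complex.I * l * s) := by
  simp [fourierTerm, mul_assoc]

theorem fourierTerm_zero : fourierTerm c t s 0 = c (0, 0) := by
  simp [fourierTerm, Prod.mk_zero_zero]

end FourierTerm

/-- For absolutely summable coefficients with the real-valuedness symmetry
`conj (c (k,l)) = c (-k,-l)`, the full double Fourier series equals
`2·Re f^{+,+} + 2·Re f^{+,-} − F − G − c(0,0)`. -/
theorem stmt12 (c : ℤ × ℤ → ℂ) (hc : Summable fun p => ‖c p‖)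
    (hsym : ∀ k l : ℤ, (starRingEnd ℂ) (c (k, l)) = c (-k, -l)) (t s : ℝ) :
    (∑' p : ℤ × ℤ, fourierTerm c t s p)
      = 2 * (((∑' p : {p : ℤ × ℤ // 0 ≤ p.1 ∧ 0 ≤ p.2}, fourierTerm c t s p.val).re : ℝ) : ℂ)
        + 2 * (((∑' p : {p : ℤ × ℤ // 0 ≤ p.1 ∧ p.2 ≤ 0}, fourierTerm c t s p.val).re : ℝ) : ℂ)
        - (∑' k : ℤ, c (k, 0) * Complex.exp (Complex.I * (k : ℂ) * (t : ℂ)))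
        - (∑' l : ℤ, c (0, l) * Complex.exp (Complex.I * (l : ℂ) * (s : ℂ)))
        - c (0, 0) := by
  have hf : Summable (fourierTerm c t s) :=
    .of_norm (by simpa only [norm_fourierTerm] using hc)
  rw [tsum_eq_two_re_quadrants_sub_axes hf (fourierTerm_neg hsym t s), fourierTerm_zero]
  simp only [fourierTerm_mk_zero, fourierTerm_zero_mk]
end

section
/- Let (a_k)_{k≥1} be a sequence of complex numbers with |a_k| < 1 for all k. For n ≥ 1 define B_n : ℝ → ℂ by B_n(t) = (√(1−|a_n|²)/(1 − conj(a_n)·e^{it})) · ∏_{l=1}^{n−1} (e^{it} − a_l)/(1 − conj(a_l)·e^{it}). Then for all m, n ≥ 1, (1/2π) ∫_0^{2π} B_m(t)·conj(B_n(t)) dt = 1 if m = n and 0 otherwise. -/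
open scoped Real

/-- The `n`-th Takenaka–Malmquist function on the unit circle, for parameters `a`. -/
noncomputable def TM (a : ℕ → ℂ) (n : ℕ) (t : ℝ) : ℂ :=
  ((Real.sqrt (1 - ‖a n‖ ^ 2) : ℝ) : ℂ)
      / (1 - (starRingEnd ℂ) (a n) * Complex.exp (Complex.I * (t : ℂ))) *
    ∏ l ∈ Finset.Icc 1 (n - 1),
      (Complex.exp (Complex.I * (t : ℂ)) - a l)
        / (1 - (starRingEnd ℂ) (a l) * Complex.exp (Complex.I * (t : ℂ)))

/-!
On the unit circle `conj z = z⁻¹`, so every Blaschke factor `(z - a) / (1 - conj a * z)` with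
`‖a‖ < 1` has modulus one. For `n ≤ m` the common factors of `B_m` and `B_n` therefore cancel in
`B_m * conj B_n`, which becomes `z / (z - a n) * K(z)` with `K` holomorphic on the closed disc, and
the Cauchy integral formula evaluates the normalized integral as `K (a n)`. For `n < m` this
vanishes because `K` contains the Blaschke factor of `a n`; for `m = n` it is
`(1 - ‖a n‖ ^ 2) / (1 - ‖a n‖ ^ 2) = 1`. The case `m < n` follows by conjugation.
-/

open Complex Metric ComplexConjugate

theorem intervalIntegral.integral_conj {𝕜 : Type*} [RCLike 𝕜] {f : ℝ → 𝕜} {a b : ℝ}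
    {μ : MeasureTheory.Measure ℝ} :
    ∫ t in a..b, conj (f t) ∂μ = conj (∫ t in a..b, f t ∂μ) := by
  simp only [intervalIntegral, _root_.integral_conj, map_sub]

theorem integral_circleMap_sub_center_div_sub_mul {f : ℂ → ℂ} {c w : ℂ} {R : ℝ}
    (hf : DifferentiableOn ℂ f (closedBall c R)) (hw : w ∈ ball c R) :
    ∫ θ in (0 : ℝ)..2 * π,
        (circleMap c R θ - c) / (circleMap c R θ - w) * f (circleMap c R θ) = 2 * π * f w := by
  have hcauchy := hf.circleIntegral_sub_inv_smul hw
  simp only [circleIntegral, deriv_circleMap, smul_eq_mul] at hcauchy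
  have hI : ∫ θ in (0 : ℝ)..2 * π,
        circleMap 0 R θ * I * ((circleMap c R θ - w)⁻¹ * f (circleMap c R θ))
      = I * ∫ θ in (0 : ℝ)..2 * π,
        (circleMap c R θ - c) / (circleMap c R θ - w) * f (circleMap c R θ) := by
    rw [← intervalIntegral.integral_const_mul]
    congr 1 with θ
    rw [circleMap_sub_center]
    ring
  refine mul_left_cancel₀ I_ne_zero ?_
  rw [← hI, hcauchy]
  ring

theorem one_sub_conj_mul_ne_zero {a z : ℂ} (ha : ‖a‖ < 1) (hz : ‖z‖ ≤ 1) :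
    1 - conj a * z ≠ 0 := by
  refine sub_ne_zero.mpr fun h => ?_
  have : ‖conj a * z‖ < 1 := by
    rw [norm_mul, RCLike.norm_conj]
    exact mul_lt_one_of_nonneg_of_lt_one_left (norm_nonneg a) ha hz
  rw [← h, norm_one] at this
  exact lt_irrefl 1 this

noncomputable def blaschkeFactor (a z : ℂ) : ℂ := (z - a) / (1 - conj a * z)

theorem norm_blaschkeFactor_of_norm_eq_one {a z : ℂ} (ha : ‖a‖ < 1) (hz : ‖z‖ = 1) :
    ‖blaschkeFactor a z‖ = 1 := by
  have hden : ‖1 - conj a * z‖ = ‖z - a‖ := by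
    calc ‖1 - conj a * z‖ = ‖conj z * (1 - conj a * z)‖ := by
          rw [norm_mul, RCLike.norm_conj, hz, one_mul]
      _ = ‖conj (z - a)‖ := by
          rw [mul_sub, mul_one, mul_left_comm, mul_comm (conj z) z, mul_conj', hz]
          simp
      _ = ‖z - a‖ := RCLike.norm_conj _
  rw [blaschkeFactor, norm_div, hden, div_self]
  exact norm_ne_zero_iff.mpr (sub_ne_zero.mpr fun h => by rw [h] at hz; linarith)

theorem blaschkeFactor_self (a : ℂ) : blaschkeFactor a a = 0 := by
  simp [blaschkeFactor]

theorem differentiableAt_blaschkeFactor {a z : ℂ} (ha : ‖a‖ < 1) (hz : ‖z‖ ≤ 1) :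
    DifferentiableAt ℂ (blaschkeFactor a) z :=
  (differentiableAt_id.sub_const a).div ((differentiableAt_id.const_mul _).const_sub 1)
    (one_sub_conj_mul_ne_zero ha hz)

noncomputable def takenakaMalmquist (a : ℕ → ℂ) (n : ℕ) (z : ℂ) : ℂ :=
  (√(1 - ‖a n‖ ^ 2) : ℂ) / (1 - conj (a n) * z) *
    ∏ l ∈ Finset.Icc 1 (n - 1), blaschkeFactor (a l) z

theorem TM_eq_takenakaMalmquist_circleMap (a : ℕ → ℂ) (n : ℕ) (t : ℝ) :
    TM a n t = takenakaMalmquist a n (circleMap 0 1 t) := by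
  simp only [TM, takenakaMalmquist, blaschkeFactor, circleMap_zero, ofReal_one, one_mul,
    mul_comm (t : ℂ) I]

noncomputable def takenakaMalmquistKernel (a : ℕ → ℂ) (m n : ℕ) (z : ℂ) : ℂ :=
  (√(1 - ‖a m‖ ^ 2) : ℂ) * (√(1 - ‖a n‖ ^ 2) : ℂ) / (1 - conj (a m) * z) *
    ∏ l ∈ Finset.Icc n (m - 1), blaschkeFactor (a l) z

section

variable {a : ℕ → ℂ} {m n : ℕ}

theorem takenakaMalmquist_mul_conj {z : ℂ} (ha : ∀ k, 1 ≤ k → ‖a k‖ < 1) (hn : 1 ≤ n)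
    (hnm : n ≤ m) (hz : ‖z‖ = 1) :
    takenakaMalmquist a m z * conj (takenakaMalmquist a n z)
      = z / (z - a n) * takenakaMalmquistKernel a m n z := by
  have hsplit : ∏ l ∈ Finset.Icc 1 (m - 1), blaschkeFactor (a l) z
      = (∏ l ∈ Finset.Icc 1 (n - 1), blaschkeFactor (a l) z) *
        ∏ l ∈ Finset.Icc n (m - 1), blaschkeFactor (a l) z := by
    have hIcc : ∀ i j, 1 ≤ i → Finset.Icc i (j - 1) = Finset.Ico i j := fun i j hi => by
      ext; simp only [Finset.mem_Icc, Finset.mem_Ico]; omega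
    rw [hIcc 1 m le_rfl, hIcc 1 n le_rfl, hIcc n m hn,
      Finset.prod_Ico_consecutive _ hn hnm]
  have hP : ‖∏ l ∈ Finset.Icc 1 (n - 1), blaschkeFactor (a l) z‖ = 1 := by
    rw [norm_prod]
    exact Finset.prod_eq_one fun l hl =>
      norm_blaschkeFactor_of_norm_eq_one (ha l (Finset.mem_Icc.mp hl).1) hz
  have hz0 : z ≠ 0 := by rintro rfl; simp at hz
  have hconj_den : 1 - a n * conj z = (z - a n) / z := by
    rw [← inv_eq_conj hz]; field_simp
  rw [takenakaMalmquist, takenakaMalmquist, takenakaMalmquistKernel, hsplit]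
  simp only [map_mul, map_div₀, map_sub, map_one, conj_ofReal, conj_conj, hconj_den]
  generalize ∏ l ∈ Finset.Icc 1 (n - 1), blaschkeFactor (a l) z = P at hP ⊢
  have hPP : P * conj P = 1 := by rw [mul_conj', hP]; norm_num
  rw [div_div_eq_mul_div]
  linear_combination (√(1 - ‖a m‖ ^ 2) : ℂ) / (1 - conj (a m) * z) *
    (∏ l ∈ Finset.Icc n (m - 1), blaschkeFactor (a l) z) *
    ((√(1 - ‖a n‖ ^ 2) : ℂ) * z / (z - a n)) * hPP

theorem differentiableOn_takenakaMalmquistKernel (ha : ∀ k, 1 ≤ k → ‖a k‖ < 1) (hn : 1 ≤ n)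
    (hnm : n ≤ m) : DifferentiableOn ℂ (takenakaMalmquistKernel a m n) (closedBall 0 1) := by
  intro z hz
  rw [mem_closedBall_zero_iff] at hz
  refine DifferentiableAt.differentiableWithinAt (DifferentiableAt.mul ?_ ?_)
  · exact (differentiableAt_const _).div ((differentiableAt_id.const_mul _).const_sub 1)
      (one_sub_conj_mul_ne_zero (ha m (hn.trans hnm)) hz)
  · exact DifferentiableAt.fun_finsetProd fun l hl =>
      differentiableAt_blaschkeFactor (ha l (hn.trans (Finset.mem_Icc.mp hl).1)) hz

theorem takenakaMalmquistKernel_self (ha : ‖a n‖ < 1) (hn : 1 ≤ n) :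
    takenakaMalmquistKernel a n n (a n) = 1 := by
  have hpos : 0 < 1 - ‖a n‖ ^ 2 := by nlinarith [norm_nonneg (a n)]
  have hden : 1 - conj (a n) * a n = ((1 - ‖a n‖ ^ 2 : ℝ) : ℂ) := by
    rw [mul_comm, mul_conj']; push_cast; ring
  rw [takenakaMalmquistKernel, Finset.Icc_eq_empty (by omega : ¬n ≤ n - 1), Finset.prod_empty,
    mul_one, ← ofReal_mul, Real.mul_self_sqrt hpos.le, hden, div_self (ofReal_ne_zero.mpr hpos.ne')]

theorem takenakaMalmquistKernel_of_lt (hnm : n < m) :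
    takenakaMalmquistKernel a m n (a n) = 0 := by
  rw [takenakaMalmquistKernel, Finset.prod_eq_zero (i := n)
    (Finset.mem_Icc.mpr ⟨le_rfl, by omega⟩) (blaschkeFactor_self _), mul_zero]

theorem integral_TM_mul_conj_TM_of_le (ha : ∀ k, 1 ≤ k → ‖a k‖ < 1) (hn : 1 ≤ n)
    (hnm : n ≤ m) :
    ∫ t in (0 : ℝ)..2 * π, TM a m t * conj (TM a n t)
      = 2 * π * takenakaMalmquistKernel a m n (a n) := by
  rw [← integral_circleMap_sub_center_div_sub_mul
    (differentiableOn_takenakaMalmquistKernel ha hn hnm)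
    (mem_ball_zero_iff.mpr (ha n hn))]
  refine intervalIntegral.integral_congr fun t _ => ?_
  simp only [TM_eq_takenakaMalmquist_circleMap, sub_zero]
  exact takenakaMalmquist_mul_conj ha hn hnm (by simp)

end

/-- The Takenaka–Malmquist system is orthonormal on the unit circle with respect to the
normalized inner product `(1/2π)∫₀^{2π} f conj g`. -/
theorem stmt15 (a : ℕ → ℂ) (ha : ∀ k, 1 ≤ k → ‖a k‖ < 1) :
    ∀ m n : ℕ, 1 ≤ m → 1 ≤ n →
      (1 / (2 * π) : ℂ) * ∫ t in (0:ℝ)..(2 * π), TM a m t * (starRingEnd ℂ) (TM a n t)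
        = if m = n then 1 else 0 := by
  intro m n hm hn
  rcases lt_trichotomy n m with hnm | rfl | hmn
  · rw [integral_TM_mul_conj_TM_of_le ha hn hnm.le, takenakaMalmquistKernel_of_lt hnm,
      if_neg hnm.ne']
    ring
  · rw [integral_TM_mul_conj_TM_of_le ha hn le_rfl, takenakaMalmquistKernel_self (ha n hn) hn,
      if_pos rfl]
    have hπ : (π : ℂ) ≠ 0 := ofReal_ne_zero.mpr Real.pi_ne_zero
    field_simp
  · have hswap : ∫ t in (0 : ℝ)..2 * π, TM a m t * conj (TM a n t)
        = conj (∫ t in (0 : ℝ)..2 * π, TM a n t * conj (TM a m t)) := by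
      simp only [← intervalIntegral.integral_conj, map_mul, conj_conj, mul_comm]
    rw [hswap, integral_TM_mul_conj_TM_of_le ha hm hmn.le, takenakaMalmquistKernel_of_lt hmn,
      if_neg hmn.ne]
    simp
end
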